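/- Let A = {a_0, …, a_{N−1}} ⊂ ℤ be spectral with spectrum Γ = {λ_0, …, λ_{N−1}}, and let B = F* D_Γ F be the associated local translation matrix, where F = (1/√N)(e^{−2πiλ_j a_k})_{j,k} and D_Γ is the diagonal matrix with entries e^{2πiλ_j}. Then for every i ∈ {0, …, N−1}, every n ∈ ℤ, every x ∈ [0,1], and every t ∈ ℝ, one has B^{⌊x+t⌋}·(e^{2πi({x+t}+a_k)(λ_i+n)})_{k=0}^{N−1} = e^{2πi(λ_i+n)t}·(e^{2πi(x+a_k)(λ_i+n)})_{k=0}^{N−1}, where ⌊·⌋ and {·} denote the integer and fractional parts. -/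

import Mathlib

open Complex Real Matrix

noncomputable section

/-- The enumerations `a : Fin N → ℤ` and `l : Fin N → ℝ` list a finite set `A ⊂ ℤ` together
with a spectrum `Γ ⊂ ℝ` for it: both are injective and
`Σ_{i} e^{2πi(a_j−a_k)λ_i} = N·δ_{jk}`. -/
def IsSpectrumPair (N : ℕ) (a : Fin N → ℤ) (l : Fin N → ℝ) : Prop :=
  Function.Injective a ∧ Function.Injective l ∧
  ∀ j k : Fin N,
    ∑ i : Fin N, Complex.exp (2 * Real.pi * Complex.I *
      (((a j : ℤ) : ℂ) - ((a k : ℤ) : ℂ)) * ((l i : ℝ) : ℂ)) =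
    if j = k then (N : ℂ) else 0

/-- The Fourier matrix `F = (1/√N)(e^{−2πiλ_j a_k})_{j,k}`. -/
def FmatFin (N : ℕ) (a : Fin N → ℤ) (l : Fin N → ℝ) : Matrix (Fin N) (Fin N) ℂ := fun j k =>
  (1 / Real.sqrt N : ℝ) *
    Complex.exp (-(2 * Real.pi * Complex.I) * ((l j : ℝ) : ℂ) * ((a k : ℤ) : ℂ))

/-- The diagonal matrix `D_Γ(t)` with entries `e^{2πiλ_j t}`. -/
def DmatFin (N : ℕ) (l : Fin N → ℝ) (t : ℝ) : Matrix (Fin N) (Fin N) ℂ :=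
  Matrix.diagonal fun j => Complex.exp (2 * Real.pi * Complex.I * ((l j : ℝ) : ℂ) * (t : ℂ))

/-- The group of local translations `U_Γ(t) = F* D_Γ(t) F`. -/
def UmatFin (N : ℕ) (a : Fin N → ℤ) (l : Fin N → ℝ) (t : ℝ) : Matrix (Fin N) (Fin N) ℂ :=
  (FmatFin N a l)ᴴ * DmatFin N l t * FmatFin N a l

/-- The local translation matrix `B = U_Γ(1) = F* D_Γ F`. -/
def BmatFin (N : ℕ) (a : Fin N → ℤ) (l : Fin N → ℝ) : Matrix (Fin N) (Fin N) ℂ :=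
  UmatFin N a l 1

/-! Since `F` is unitary, the column `F*eᵢ` is an eigenvector of every `U_Γ(t) = F* D_Γ(t) F`,
with eigenvalue `e^{2πiλᵢt}`. Up to the factor `1/√N` this column is `(e^{2πiλᵢaₖ})ₖ`, and because
the `aₖ` are integers the vector `(e^{2πi(s+aₖ)(λᵢ+n)})ₖ` is a scalar multiple of it. Hence `B^m`
(`m ∈ ℤ`, `B` being invertible) multiplies it by `e^{2πimλᵢ} = e^{2πim(λᵢ+n)}`, which shifts `s` to
`s + m`; take `s = {x+t}` and `m = ⌊x+t⌋`. -/

theorem Matrix.zpow_mulVec_of_mulVec_eq_smul {n K : Type*} [Fintype n] [DecidableEq n] [Field K]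
    {A : Matrix n n K} {v : n → K} {c : K} (hA : IsUnit A.det) (hc : c ≠ 0)
    (hv : A *ᵥ v = c • v) (m : ℤ) : (A ^ m) *ᵥ v = c ^ m • v := by
  have hpow : ∀ k : ℕ, (A ^ k) *ᵥ v = c ^ k • v := by
    intro k
    induction k with
    | zero => simp
    | succ k ih => rw [pow_succ', ← mulVec_mulVec, ih, mulVec_smul, hv, smul_smul, pow_succ]
  cases m with
  | ofNat k => simpa using hpow k
  | negSucc k =>
    have hAk : IsUnit (A ^ (k + 1)).det := by rw [det_pow]; exact hA.pow _
    rw [zpow_negSucc, zpow_negSucc, eq_inv_smul_iff₀ (pow_ne_zero _ hc), ← mulVec_smul, ← hpow,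
      mulVec_mulVec, nonsing_inv_mul _ hAk, one_mulVec]

section SpectralPair

variable {N : ℕ} {a : Fin N → ℤ} {l : Fin N → ℝ}

theorem star_FmatFin_apply (j k : Fin N) :
    star (FmatFin N a l j k) =
      (1 / Real.sqrt N : ℝ) * Complex.exp (2 * Real.pi * Complex.I * (l j : ℂ) * (a k : ℂ)) := by
  rw [FmatFin, star_mul', Complex.star_def, Complex.conj_ofReal, ← Complex.exp_conj]
  congr 2
  simp only [map_mul, map_neg, map_ofNat, Complex.conj_ofReal, Complex.conj_I, map_intCast]
  ring

theorem FmatFin_conjTranspose_mul_self (h : IsSpectrumPair N a l) :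
    (FmatFin N a l)ᴴ * FmatFin N a l = 1 := by
  ext j k
  have hN : (N : ℂ) ≠ 0 := by exact_mod_cast j.pos.ne'
  have hterm : ∀ p, star (FmatFin N a l p j) * FmatFin N a l p k =
      (N : ℂ)⁻¹ * Complex.exp (2 * Real.pi * Complex.I * ((a j : ℂ) - (a k : ℂ)) * (l p : ℂ)) := by
    intro p
    rw [star_FmatFin_apply, FmatFin, mul_mul_mul_comm, ← Complex.exp_add, ← Complex.ofReal_mul,
      div_mul_div_comm, one_mul, Real.mul_self_sqrt (Nat.cast_nonneg N)]
    push_cast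
    ring_nf
  simp only [mul_apply, conjTranspose_apply, hterm, ← Finset.mul_sum, h.2.2 j k, one_apply]
  split_ifs <;> simp [hN]

theorem FmatFin_mul_conjTranspose (h : IsSpectrumPair N a l) :
    FmatFin N a l * (FmatFin N a l)ᴴ = 1 :=
  mul_eq_one_comm.mp (FmatFin_conjTranspose_mul_self h)

theorem DmatFin_add (s t : ℝ) : DmatFin N l (s + t) = DmatFin N l s * DmatFin N l t := by
  simp only [DmatFin, diagonal_mul_diagonal, ← Complex.exp_add, Complex.ofReal_add, mul_add]

theorem DmatFin_zero : DmatFin N l 0 = 1 := by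
  simp [DmatFin]

theorem UmatFin_add (h : IsSpectrumPair N a l) (s t : ℝ) :
    UmatFin N a l (s + t) = UmatFin N a l s * UmatFin N a l t := by
  simp only [UmatFin, DmatFin_add, Matrix.mul_assoc]
  rw [← Matrix.mul_assoc (FmatFin N a l), FmatFin_mul_conjTranspose h, Matrix.one_mul]

theorem UmatFin_zero (h : IsSpectrumPair N a l) : UmatFin N a l 0 = 1 := by
  rw [UmatFin, DmatFin_zero, Matrix.mul_one, FmatFin_conjTranspose_mul_self h]

theorem isUnit_det_BmatFin (h : IsSpectrumPair N a l) : IsUnit (BmatFin N a l).det := by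
  refine isUnit_det_of_right_inverse (B := UmatFin N a l (-1)) ?_
  rw [BmatFin, ← UmatFin_add h, add_neg_cancel, UmatFin_zero h]

theorem UmatFin_mulVec_conjTranspose_single (h : IsSpectrumPair N a l) (i : Fin N) (z : ℂ)
    (t : ℝ) :
    UmatFin N a l t *ᵥ ((FmatFin N a l)ᴴ *ᵥ Pi.single i z) =
      Complex.exp (2 * Real.pi * Complex.I * (l i : ℂ) * (t : ℂ)) •
        ((FmatFin N a l)ᴴ *ᵥ Pi.single i z) := by
  have hD : DmatFin N l t *ᵥ Pi.single i z =
      Complex.exp (2 * Real.pi * Complex.I * (l i : ℂ) * (t : ℂ)) • Pi.single i z := by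
    ext j
    rcases eq_or_ne j i with rfl | hj <;> simp [DmatFin, mulVec_diagonal, *]
  rw [UmatFin, mulVec_mulVec, Matrix.mul_assoc, FmatFin_mul_conjTranspose h, Matrix.mul_one,
    ← mulVec_mulVec, hD, mulVec_smul]

theorem wave_eq_smul_conjTranspose_mulVec_single (i : Fin N) (n : ℤ) (s : ℝ) :
    (fun k : Fin N => Complex.exp (2 * Real.pi * Complex.I * ((s : ℂ) + (a k : ℂ)) *
        ((l i : ℂ) + (n : ℂ)))) =
      Complex.exp (2 * Real.pi * Complex.I * (s : ℂ) * ((l i : ℂ) + (n : ℂ))) •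
        ((FmatFin N a l)ᴴ *ᵥ Pi.single i (Real.sqrt N : ℂ)) := by
  have hN : (Real.sqrt N : ℂ) ≠ 0 := by
    have : 0 < Real.sqrt N := Real.sqrt_pos.2 (by exact_mod_cast i.pos)
    exact_mod_cast this.ne'
  ext k
  simp only [mulVec_single, conjTranspose_apply, star_FmatFin_apply, Pi.smul_apply, smul_eq_mul,
    MulOpposite.smul_eq_mul_unop, MulOpposite.unop_op, col_apply]
  rw [Complex.ofReal_div, Complex.ofReal_one, div_mul_eq_mul_div, one_mul, div_mul_cancel₀ _ hN,
    ← Complex.exp_add, Complex.exp_eq_exp_iff_exists_int]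
  exact ⟨a k * n, by push_cast; ring⟩

theorem BmatFin_zpow_mulVec_wave (h : IsSpectrumPair N a l) (i : Fin N) (n m : ℤ) (s : ℝ) :
    (BmatFin N a l ^ m) *ᵥ
        (fun k : Fin N => Complex.exp (2 * Real.pi * Complex.I * ((s : ℂ) + (a k : ℂ)) *
          ((l i : ℂ) + (n : ℂ)))) =
      fun k : Fin N => Complex.exp (2 * Real.pi * Complex.I * (((s + m : ℝ) : ℂ) + (a k : ℂ)) *
          ((l i : ℂ) + (n : ℂ))) := by
  have hB := UmatFin_mulVec_conjTranspose_single h i (Real.sqrt N : ℂ) 1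
  rw [wave_eq_smul_conjTranspose_mulVec_single, wave_eq_smul_conjTranspose_mulVec_single,
    mulVec_smul, zpow_mulVec_of_mulVec_eq_smul (isUnit_det_BmatFin h) (Complex.exp_ne_zero _) hB,
    smul_smul, ← Complex.exp_int_mul, ← Complex.exp_add, Complex.exp_eq_exp_iff_exists_int.2]
  exact ⟨-(m * n), by push_cast; ring⟩

end SpectralPair

theorem Bpow_floor_action_general (N : ℕ) (a : Fin N → ℤ) (l : Fin N → ℝ)
    (h : IsSpectrumPair N a l) (i : Fin N) (n : ℤ) (x : ℝ)
    (t : ℝ) :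
    (BmatFin N a l ^ ⌊x + t⌋).mulVec
      (fun k : Fin N => Complex.exp (2 * Real.pi * Complex.I *
        (((Int.fract (x + t) : ℝ) : ℂ) + ((a k : ℤ) : ℂ)) * (((l i : ℝ) : ℂ) + (n : ℂ)))) =
    fun k : Fin N => Complex.exp (2 * Real.pi * Complex.I *
        (((l i : ℝ) : ℂ) + (n : ℂ)) * (t : ℂ)) *
      Complex.exp (2 * Real.pi * Complex.I *
        ((x : ℂ) + ((a k : ℤ) : ℂ)) * (((l i : ℝ) : ℂ) + (n : ℂ))) := by
  rw [BmatFin_zpow_mulVec_wave h, Int.fract_add_floor]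
  ext k
  rw [← Complex.exp_add]
  congr 1
  push_cast
  ring

/-- for a spectral pair (`A = {a_0,…,a_{N−1}}`, `Γ = {λ_0,…,λ_{N−1}}`) with
local translation matrix `B = F* D_Γ F`, for every `i`, `n ∈ ℤ`, `x ∈ [0,1]`, `t ∈ ℝ`:
`B^{⌊x+t⌋}·(e^{2πi({x+t}+a_k)(λ_i+n)})_k = e^{2πi(λ_i+n)t}·(e^{2πi(x+a_k)(λ_i+n)})_k`. -/
theorem Bpow_floor_action (N : ℕ) (a : Fin N → ℤ) (l : Fin N → ℝ)
    (h : IsSpectrumPair N a l) (i : Fin N) (n : ℤ) (x : ℝ)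
    (hx : x ∈ Set.Icc (0 : ℝ) 1) (t : ℝ) :
    (BmatFin N a l ^ ⌊x + t⌋).mulVec
      (fun k : Fin N => Complex.exp (2 * Real.pi * Complex.I *
        (((Int.fract (x + t) : ℝ) : ℂ) + ((a k : ℤ) : ℂ)) * (((l i : ℝ) : ℂ) + (n : ℂ)))) =
    fun k : Fin N => Complex.exp (2 * Real.pi * Complex.I *
        (((l i : ℝ) : ℂ) + (n : ℂ)) * (t : ℂ)) *
      Complex.exp (2 * Real.pi * Complex.I *
        ((x : ℂ) + ((a k : ℤ) : ℂ)) * (((l i : ℝ) : ℂ) + (n : ℂ))) :=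
  Bpow_floor_action_general N a l h i n x t
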